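/- The triple (𝔐(X), ⌊ ⌋, i_X) is the free operated monoid on the set X: for every operated monoid (U, P_U) and every map f : X → U, there exists a unique monoid homomorphism F : 𝔐(X) → U commuting with the operators (F(⌊w⌋) = P_U(F(w))) such that F ∘ i_X = f. -/
import Mathlib


namespace OpMon

/-- Letters of bracketed words: either a variable or a bracketed word. -/
inductive Letter (X : Type) : Type
  | of : X → Letter X
  | br : List (Letter X) → Letter X

/-- The free operated monoid `𝔐(X)`, modeled as lists of letters (free monoid on letters). -/
abbrev M (X : Type) := List (Letter X)

/-- The operator `⌊ ⌋` on `𝔐(X)`. -/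
def L {X : Type} (w : M X) : M X := [Letter.br w]

mutual
  /-- Substitute each variable by a word (letter version). -/
  def bindL {Y Z : Type} : Letter Y → (Y → M Z) → M Z
    | .of y, f => f y
    | .br w, f => [.br (bindW w f)]
  /-- Substitute each variable by a word (word version). -/
  def bindW {Y Z : Type} : M Y → (Y → M Z) → M Z
    | [], _ => []
    | a :: as, f => bindL a f ++ bindW as f
end

mutual
  /-- Count occurrences of variables satisfying `p` (letter version). -/
  def cntL {Y : Type} (p : Y → Bool) : Letter Y → ℕ
    | .of y => if p y then 1 else 0
    | .br w => cntW p w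
  /-- Count occurrences of variables satisfying `p` (word version). -/
  def cntW {Y : Type} (p : Y → Bool) : M Y → ℕ
    | [] => 0
    | a :: as => cntL p a + cntW p as
end

/-- The star letter `⋆`, modeled as `none`. -/
def starW {X : Type} : M (Option X) := [Letter.of none]

/-- `q` is a `⋆`-bracketed word: exactly one occurrence of `⋆`. -/
def IsStar {X : Type} (q : M (Option X)) : Prop :=
  cntW (fun o => o.isNone) q = 1

/-- Substitution `q|_u` of `u` for `⋆`. -/
def sub {X : Type} (q : M (Option X)) (u : M X) : M X :=
  bindW q (fun o => Option.elim o u (fun x => [Letter.of x]))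

/-- Embed `𝔐(X)` into `𝔐(X ∪ {⋆})`. -/
def emb {X : Type} (w : M X) : M (Option X) :=
  bindW w (fun x => [Letter.of (some x)])

/-- Substitute a `⋆`-word `r` for the `⋆` of `q`, yielding a word on `X ∪ {⋆}`. -/
def subS {X : Type} (q r : M (Option X)) : M (Option X) :=
  bindW q (fun o => Option.elim o r (fun x => [Letter.of (some x)]))

/-- `p` is a `(⋆₁,⋆₂)`-bracketed word (⋆₁ = `none`, ⋆₂ = `some none`). -/
def IsStar2 {X : Type} (p : M (Option (Option X))) : Prop :=
  cntW (fun o => o.isNone) p = 1 ∧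
  cntW (fun o => match o with | some none => true | _ => false) p = 1

/-- Substitution `p|_{u₁,u₂}`. -/
def sub2 {X : Type} (p : M (Option (Option X))) (u₁ u₂ : M X) : M X :=
  bindW p (fun o => match o with
    | none => u₁
    | some none => u₂
    | some (some x) => [Letter.of x])

/-- Substitution `p|_{u₁,⋆₂}`, a `⋆`-word. -/
def sub2L {X : Type} (p : M (Option (Option X))) (u₁ : M X) : M (Option X) :=
  bindW p (fun o => match o with
    | none => emb u₁
    | some none => [Letter.of none]
    | some (some x) => [Letter.of (some x)])

/-- Substitution `p|_{⋆₁,u₂}`, a `⋆`-word. -/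
def sub2R {X : Type} (p : M (Option (Option X))) (u₂ : M X) : M (Option X) :=
  bindW p (fun o => match o with
    | none => [Letter.of none]
    | some none => emb u₂
    | some (some x) => [Letter.of (some x)])

/-- `R^c`. -/
def Rc {X : Type} (R : Set (M X × M X)) : Set (M X × M X) :=
  {p | ∃ q a b, IsStar q ∧ (a, b) ∈ R ∧ p = (sub q a, sub q b)}

/-- Inverse relation `R⁻¹`. -/
def relInv {X : Type} (R : Set (M X × M X)) : Set (M X × M X) :=
  {p | (p.2, p.1) ∈ R}

/-- Closure under right mult. (C1), left mult. (C2), and the operator (C3). -/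
def Closed {X : Type} (S : Set (M X × M X)) : Prop :=
  ∀ a b, (a, b) ∈ S → ∀ c : M X,
    (a ++ c, b ++ c) ∈ S ∧ (c ++ a, c ++ b) ∈ S ∧ (L a, L b) ∈ S

/-- Composition of relations. -/
def relComp {X : Type} (R S : Set (M X × M X)) : Set (M X × M X) :=
  {p | ∃ c, (p.1, c) ∈ R ∧ (c, p.2) ∈ S}

/-- `relPow R n = R^(n+1)`. -/
def relPow {X : Type} (R : Set (M X × M X)) : ℕ → Set (M X × M X)
  | 0 => R
  | n + 1 => relComp (relPow R n) R

/-- Operated congruence. -/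
def IsOpCong {X : Type} (T : Set (M X × M X)) : Prop :=
  (∀ a, (a, a) ∈ T) ∧ (∀ a b, (a, b) ∈ T → (b, a) ∈ T) ∧
  (∀ a b c, (a, b) ∈ T → (b, c) ∈ T → (a, c) ∈ T) ∧ Closed T

/-- The operated congruence `⟨R⟩` generated by `R`. -/
def ocong {X : Type} (R : Set (M X × M X)) : Set (M X × M X) :=
  ⋂₀ {T | IsOpCong T ∧ R ⊆ T}

/-- Equivalence relation (as a set of pairs). -/
def IsEqv {X : Type} (T : Set (M X × M X)) : Prop :=
  (∀ a, (a, a) ∈ T) ∧ (∀ a b, (a, b) ∈ T → (b, a) ∈ T) ∧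
  (∀ a b c, (a, b) ∈ T → (b, c) ∈ T → (a, c) ∈ T)

/-- The equivalence `T^e` generated by `T`. -/
def eqgen {X : Type} (T : Set (M X × M X)) : Set (M X × M X) :=
  ⋂₀ {E | IsEqv E ∧ T ⊆ E}

/-- A monomial order: a well-founded linear order compatible with the operations. -/
def IsMonomialOrder {X : Type} (lt : M X → M X → Prop) : Prop :=
  WellFounded lt ∧
  (∀ a b, a = b ∨ lt a b ∨ lt b a) ∧
  (∀ a b c, lt a b → lt b c → lt a c) ∧
  (∀ u v w, lt u v → lt (u ++ w) (v ++ w) ∧ lt (w ++ u) (w ++ v) ∧ lt (L u) (L v))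

/-- The term-rewriting system `Π_S`. -/
def PiS {X : Type} (lt : M X → M X → Prop) (S : Set (M X × M X)) : Set (M X × M X) :=
  {p | ∃ q t v, IsStar q ∧ ((t, v) ∈ S ∨ (v, t) ∈ S) ∧ lt v t ∧ p = (sub q t, sub q v)}

/-- One-step rewriting. -/
def Rew {X : Type} (lt : M X → M X → Prop) (S : Set (M X × M X)) (a b : M X) : Prop :=
  (a, b) ∈ PiS lt S

/-- Joinability under `Π_S`. -/
def Joinable {X : Type} (lt : M X → M X → Prop) (S : Set (M X × M X)) (f g : M X) : Prop :=
  ∃ h, Relation.ReflTransGen (Rew lt S) f h ∧ Relation.ReflTransGen (Rew lt S) g h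

/-- Termination of `Π_S`. -/
def Terminating {X : Type} (lt : M X → M X → Prop) (S : Set (M X × M X)) : Prop :=
  ¬ ∃ f : ℕ → M X, ∀ n, Rew lt S (f n) (f (n + 1))

/-- Confluence of `Π_S`. -/
def Confluent {X : Type} (lt : M X → M X → Prop) (S : Set (M X × M X)) : Prop :=
  ∀ f g h, Relation.ReflTransGen (Rew lt S) f g → Relation.ReflTransGen (Rew lt S) f h →
    Joinable lt S g h

/-- Irreducible elements: `𝔐(X) \ Dom(Π_S)`. -/
def Irr {X : Type} (lt : M X → M X → Prop) (S : Set (M X × M X)) : Set (M X) :=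
  {f | ∀ g, ¬ Rew lt S f g}

/-- Predecessors of `a`. -/
def Pre {X : Type} (lt : M X → M X → Prop) (S : Set (M X × M X)) (a : M X) : Set (M X) :=
  {f | Relation.ReflTransGen (Rew lt S) f a}

/-- `W` is a section of `⟨S⟩`: every congruence class meets `W` in exactly one element. -/
def IsSection {X : Type} (S : Set (M X × M X)) (W : Set (M X)) : Prop :=
  ∀ a : M X, ∃! w, w ∈ W ∧ (a, w) ∈ ocong S

/-- Separated placements `(u₁,q₁)`, `(u₂,q₂)` in `w`. -/
def Separated {X : Type} (u₁ : M X) (q₁ : M (Option X)) (u₂ : M X) (q₂ : M (Option X))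
    (w : M X) : Prop :=
  ∃ p, IsStar2 p ∧ q₁ = sub2R p u₂ ∧ q₂ = sub2L p u₁ ∧ w = sub2 p u₁ u₂

/-- Nested placements: one context is a subcontext of the other. -/
def Nested {X : Type} (q₁ q₂ : M (Option X)) : Prop :=
  ∃ q, IsStar q ∧ (q₂ = subS q₁ q ∨ q₁ = subS q₂ q)

/-- Intersecting placements `(u₁,q₁)`, `(u₂,q₂)` in `w`. -/
def Intersecting {X : Type} (w u₁ : M X) (q₁ : M (Option X)) (u₂ : M X)
    (q₂ : M (Option X)) : Prop :=
  ∃ q a b c, IsStar q ∧ a ≠ ([] : M X) ∧ b ≠ ([] : M X) ∧ c ≠ ([] : M X) ∧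
    w = sub q (a ++ b ++ c) ∧
    ((q₁ = subS q (starW ++ emb c) ∧ q₂ = subS q (emb a ++ starW)) ∨
     (q₁ = subS q (emb a ++ starW) ∧ q₂ = subS q (starW ++ emb c)))

/-- Defining relations of the free `∗`-monoid. -/
def SStar (X : Type) : Set (M X × M X) :=
  {p | (∃ w : M X, p = (L (L w), w)) ∨
       (∃ u v : M X, u ≠ [] ∧ v ≠ [] ∧ p = (L (u ++ v), L v ++ L u)) ∨
       p = (L [], [])}

/-- Defining relations of the free group. -/
def SGrp (X : Type) : Set (M X × M X) :=
  {p | (∃ w : M X, p = (L (L w), w)) ∨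
       (∃ u v : M X, u ≠ [] ∧ v ≠ [] ∧ p = (L (u ++ v), L v ++ L u)) ∨
       (∃ w : M X, p = (L w ++ w, [])) ∨
       (∃ w : M X, p = (w ++ L w, []))}


mutual
  def evalL {X U : Type} [Monoid U] (P : U → U) (f : X → U) : Letter X → U
    | .of x => f x
    | .br w => P (evalW P f w)
  def evalW {X U : Type} [Monoid U] (P : U → U) (f : X → U) : M X → U
    | [] => 1
    | a :: as => evalL P f a * evalW P f as
end

theorem evalW_append {X U : Type} [Monoid U] (P : U → U) (f : X → U) :
    ∀ u v : M X, evalW P f (u ++ v) = evalW P f u * evalW P f v := by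
  intro u v
  induction u with
  | nil => simp [evalW]
  | cons a as ih => simp [evalW, ih, mul_assoc]

mutual
  theorem uniqL {X U : Type} [Monoid U] (P : U → U) (f : X → U) (F : M X → U)
      (h1 : ∀ u v : M X, F (u ++ v) = F u * F v)
      (h2 : F ([] : M X) = 1)
      (h3 : ∀ w : M X, F (L w) = P (F w))
      (h4 : ∀ x : X, F [Letter.of x] = f x) :
      ∀ a : Letter X, F [a] = evalL P f a
    | .of x => by rw [h4]; rfl
    | .br w => by
        have := h3 w
        rw [show ([Letter.br w] : M X) = L w from rfl, this,
          uniqW P f F h1 h2 h3 h4 w]; rfl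
  theorem uniqW {X U : Type} [Monoid U] (P : U → U) (f : X → U) (F : M X → U)
      (h1 : ∀ u v : M X, F (u ++ v) = F u * F v)
      (h2 : F ([] : M X) = 1)
      (h3 : ∀ w : M X, F (L w) = P (F w))
      (h4 : ∀ x : X, F [Letter.of x] = f x) :
      ∀ w : M X, F w = evalW P f w
    | [] => h2
    | a :: as => by
        have : F (a :: as) = F ([a] ++ as) := rfl
        rw [this, h1, uniqL P f F h1 h2 h3 h4 a, uniqW P f F h1 h2 h3 h4 as]; rfl
end

/-- `𝔐(X)` is the free operated monoid on `X`. -/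
theorem free_operated_monoid (X U : Type) [Monoid U] (P : U → U) (f : X → U) :
    ∃! F : M X → U,
      (∀ u v : M X, F (u ++ v) = F u * F v) ∧
      F ([] : M X) = 1 ∧
      (∀ w : M X, F (L w) = P (F w)) ∧
      (∀ x : X, F [Letter.of x] = f x) := by
  refine ⟨evalW P f, ⟨evalW_append P f, rfl, fun w => by simp [L, evalW, evalL], fun x => ?_⟩, ?_⟩
  · simp [evalW, evalL]
  · rintro F ⟨h1, h2, h3, h4⟩
    funext w
    exact uniqW P f F h1 h2 h3 h4 w

end OpMon
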